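/- arXiv:2308.07015 — 5 statements merged into one kernel-verified Lean document; each statement's English description precedes it below -/
import Mathlib

section
/- Let p be a polynomial in one variable over ℂ all of whose zeros are simple, i.e. for every w ∈ ℂ with p(w) = 0 one has p′(w) ≠ 0. Let (x, y, z) ∈ ℂ³ satisfy x·y = p(z). Then the ℂ-linear span of the three vectors v₁ = (x, −y, 0), v₂ = (p′(z), 0, y), v₃ = (0, p′(z), x) in ℂ³ equals the kernel of the linear functional ℓ : ℂ³ → ℂ, ℓ(a, b, c) = y·a + x·b − p′(z)·c. In particular, the vector fields θ₁ = x∂/∂x − y∂/∂y, θ₂ = p′(z)∂/∂x + y∂/∂z, θ₃ = p′(z)∂/∂y + x∂/∂z span the tangent space of the Danielewski surface D_p at every point. -/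
/-- On a Danielewski surface `x y = p(z)` with `p` having only simple zeros, the
values of the complete fields `θ₁ = x∂x − y∂y`, `θ₂ = p′(z)∂x + y∂z`,
`θ₃ = p′(z)∂y + x∂z` span the tangent space, i.e. the kernel of the
differential `(a,b,c) ↦ ya + xb − p′(z)c` of the defining equation. -/
theorem danielewski_tangent_span (p : Polynomial ℂ)
    (hp : ∀ w : ℂ, p.eval w = 0 → (Polynomial.derivative p).eval w ≠ 0)
    (x y z : ℂ) (hxyz : x * y = p.eval z)
    (ℓ : (Fin 3 → ℂ) →ₗ[ℂ] ℂ)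
    (hℓ : ∀ v : Fin 3 → ℂ,
      ℓ v = y * v 0 + x * v 1 - (Polynomial.derivative p).eval z * v 2) :
    Submodule.span ℂ
        ({![x, -y, 0], ![(Polynomial.derivative p).eval z, 0, y],
          ![0, (Polynomial.derivative p).eval z, x]} : Set (Fin 3 → ℂ)) =
      LinearMap.ker ℓ := by
  set d := (Polynomial.derivative p).eval z with hd
  set S : Set (Fin 3 → ℂ) := {![x, -y, 0], ![d, 0, y], ![0, d, x]} with hS
  have m1 : ![x, -y, 0] ∈ Submodule.span ℂ S :=
    Submodule.subset_span (by simp [hS])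
  have m2 : ![d, 0, y] ∈ Submodule.span ℂ S :=
    Submodule.subset_span (by simp [hS])
  have m3 : ![0, d, x] ∈ Submodule.span ℂ S :=
    Submodule.subset_span (by simp [hS])
  apply le_antisymm
  · rw [Submodule.span_le]
    rintro v (rfl | rfl | rfl) <;>
      simp [LinearMap.mem_ker, hℓ, SetLike.mem_coe] <;> ring
  · intro v hv
    rw [LinearMap.mem_ker, hℓ v] at hv
    by_cases hdz : d = 0
    · have hx : x ≠ 0 := by
        intro h
        exact hp z (by rw [← hxyz, h, zero_mul]) (by rw [← hd, hdz])
      have hy : y ≠ 0 := by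
        intro h
        exact hp z (by rw [← hxyz, h, mul_zero]) (by rw [← hd, hdz])
      have hv' : v = (v 0 / x) • ![x, -y, 0] + (v 2 / y) • ![d, 0, y] := by
        funext i
        fin_cases i <;>
          simp [hdz] <;> field_simp
        · rw [hdz] at hv; linear_combination hv
      rw [hv']
      exact Submodule.add_mem _ (Submodule.smul_mem _ _ m1) (Submodule.smul_mem _ _ m2)
    · have hv' : v = (v 0 / d) • ![d, 0, y] + (v 1 / d) • ![0, d, x] := by
        funext i
        fin_cases i <;> simp <;> field_simp
        linear_combination -hv
      rw [hv']
      exact Submodule.add_mem _ (Submodule.smul_mem _ _ m2) (Submodule.smul_mem _ _ m3)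
end

section
/- Fix b₁, b₂ ∈ ℂ. In the polynomial ring ℂ[z₂, z₃, w₁, w₂, w₃] (multivariate polynomials in five variables over ℂ), let V₁, V₂, V₃ be the ℂ-linear derivations determined on the generators by: V₁(z₂) = −z₂w₃, V₁(z₃) = z₂w₂, V₁(w₁) = w₁w₃ − w₂², V₁(w₂) = 0, V₁(w₃) = 0; V₂(z₂) = 0, V₂(z₃) = 0, V₂(w₁) = z₃², V₂(w₂) = −z₂z₃, V₂(w₃) = z₂²; V₃(z₂) = z₃², V₃(z₃) = 0, V₃(w₁) = 0, V₃(w₂) = −w₁z₃, V₃(w₃) = w₁z₂ − w₂z₃. Then each Vᵢ (i = 1, 2, 3) annihilates both defining polynomials f₁ = w₁z₂ + w₂z₃ − b₁ and f₂ = w₂z₂ + w₃z₃ − b₂. In particular V₁, V₂, V₃ are tangent to the Gromov–Vaserstein fiber 𝒢 = {(z₂, z₃, w₁, w₂, w₃) ∈ ℂ⁵ : w₁z₂ + w₂z₃ = b₁, w₂z₂ + w₃z₃ = b₂}. -/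
open MvPolynomial

/- Variables: `z₂ = X 0`, `z₃ = X 1`, `w₁ = X 2`, `w₂ = X 3`, `w₃ = X 4`. -/

/-- `V₁ = −z₂w₃ ∂z₂ + z₂w₂ ∂z₃ + (w₁w₃ − w₂²) ∂w₁`. -/
noncomputable def V1 : Derivation ℂ (MvPolynomial (Fin 5) ℂ) (MvPolynomial (Fin 5) ℂ) :=
  mkDerivation ℂ ![-(X 0 * X 4), X 0 * X 3, X 2 * X 4 - X 3 ^ 2, 0, 0]

/-- `V₂ = z₃² ∂w₁ − z₂z₃ ∂w₂ + z₂² ∂w₃`. -/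
noncomputable def V2 : Derivation ℂ (MvPolynomial (Fin 5) ℂ) (MvPolynomial (Fin 5) ℂ) :=
  mkDerivation ℂ ![0, 0, X 1 ^ 2, -(X 0 * X 1), X 0 ^ 2]

/-- `V₃ = z₃² ∂z₂ − w₁z₃ ∂w₂ + (w₁z₂ − w₂z₃) ∂w₃`. -/
noncomputable def V3 : Derivation ℂ (MvPolynomial (Fin 5) ℂ) (MvPolynomial (Fin 5) ℂ) :=
  mkDerivation ℂ ![X 1 ^ 2, 0, 0, -(X 2 * X 1), X 2 * X 0 - X 3 * X 1]

/-- The fields `V₁, V₂, V₃` annihilate both defining polynomials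
`f₁ = w₁z₂ + w₂z₃ − b₁` and `f₂ = w₂z₂ + w₃z₃ − b₂` of the Gromov–Vaserstein
fiber, hence are tangent to it. -/
theorem gv_fiber_tangent (b₁ b₂ : ℂ) :
    V1 (X 2 * X 0 + X 3 * X 1 - C b₁) = 0 ∧
    V1 (X 3 * X 0 + X 4 * X 1 - C b₂) = 0 ∧
    V2 (X 2 * X 0 + X 3 * X 1 - C b₁) = 0 ∧
    V2 (X 3 * X 0 + X 4 * X 1 - C b₂) = 0 ∧
    V3 (X 2 * X 0 + X 3 * X 1 - C b₁) = 0 ∧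
    V3 (X 3 * X 0 + X 4 * X 1 - C b₂) = 0 := by
  refine ⟨?_, ?_, ?_, ?_, ?_, ?_⟩ <;>
  · simp only [V1, V2, V3, map_sub, map_add, Derivation.leibniz, mkDerivation_X,
      ← MvPolynomial.algebraMap_eq, Derivation.map_algebraMap,
      Matrix.cons_val_zero, Matrix.cons_val_one, Matrix.cons_val_two,
      Matrix.cons_val_three, Matrix.cons_val_four, Matrix.vecHead, Matrix.vecTail,
      Matrix.head_cons, Function.comp, Matrix.cons_val_succ, smul_eq_mul]
    ring
end

section
/- Fix (b₁, b₂) ∈ ℂ² ∖ {(0,0)}. In ℂ[z₂, z₃, w₁, w₂, w₃], let V₁, V₂, V₃ be the ℂ-linear derivations determined on the generators by: V₁(z₂) = −z₂w₃, V₁(z₃) = z₂w₂, V₁(w₁) = w₁w₃ − w₂², V₁(w₂) = 0, V₁(w₃) = 0; V₂(z₂) = 0, V₂(z₃) = 0, V₂(w₁) = z₃², V₂(w₂) = −z₂z₃, V₂(w₃) = z₂²; V₃(z₂) = z₃², V₃(z₃) = 0, V₃(w₁) = 0, V₃(w₂) = −w₁z₃, V₃(w₃) = w₁z₂ − w₂z₃.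 Let I be the ideal generated by f₁ = w₁z₂ + w₂z₃ − b₁ and f₂ = w₂z₂ + w₃z₃ − b₂. Then: V₁(w₂) = 0; V₂(w₂) = −z₂z₃, V₂(V₂(w₂)) = 0, and z₂z₃ ∉ I; V₃(w₂) = −w₁z₃, V₃(V₃(w₂)) = 0, and w₁z₃ ∉ I. (Hence in the coordinate ring of 𝒢 the function w₂ lies in ker V₁ and in ker Vᵢ² \ ker Vᵢ for i = 2, 3, providing the admissible rooted tree with root V₁ for the compatible 3-tuple (V₁, V₂, V₃).) -/
open MvPolynomial

/-- The admissible-tree data for the compatible 3-tuple `(V₁, V₂, V₃)` on the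
Gromov–Vaserstein fiber: `w₂ ∈ ker V₁`, and in the coordinate ring
`w₂ ∈ ker Vᵢ² \ ker Vᵢ` for `i = 2, 3`, since `V₂ w₂ = −z₂z₃`,
`V₃ w₂ = −w₁z₃` and `z₂z₃`, `w₁z₃` are nonzero modulo the defining ideal. -/
theorem gv_fiber_admissible_tree (b₁ b₂ : ℂ) (hb : (b₁, b₂) ≠ (0, 0)) :
    V1 (X 3) = 0 ∧
    V2 (X 3) = -(X 0 * X 1) ∧ V2 (V2 (X 3)) = 0 ∧
      (X 0 * X 1 : MvPolynomial (Fin 5) ℂ) ∉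
        Ideal.span {X 2 * X 0 + X 3 * X 1 - C b₁, X 3 * X 0 + X 4 * X 1 - C b₂} ∧
    V3 (X 3) = -(X 2 * X 1) ∧ V3 (V3 (X 3)) = 0 ∧
      (X 2 * X 1 : MvPolynomial (Fin 5) ℂ) ∉
        Ideal.span {X 2 * X 0 + X 3 * X 1 - C b₁, X 3 * X 0 + X 4 * X 1 - C b₂} := by

  have key : ∀ (p : Fin 5 → ℂ), eval p (X 2 * X 0 + X 3 * X 1 - C b₁) = 0 →
      eval p (X 3 * X 0 + X 4 * X 1 - C b₂) = 0 →
      ∀ g : MvPolynomial (Fin 5) ℂ, eval p g ≠ 0 →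
      g ∉ Ideal.span {X 2 * X 0 + X 3 * X 1 - C b₁, X 3 * X 0 + X 4 * X 1 - C b₂} := by
    intro p h1 h2 g hg hmem
    apply hg
    have hle : Ideal.span {X 2 * X 0 + X 3 * X 1 - C b₁, X 3 * X 0 + X 4 * X 1 - C b₂} ≤
        RingHom.ker (eval p) := by
      rw [Ideal.span_le]
      intro f hf
      rcases hf with rfl | rfl
      · exact h1
      · exact h2
    exact hle hmem
  refine ⟨?_, ?_, ?_, ?_, ?_, ?_, ?_⟩
  · simp [V1, mkDerivation_X]
  · simp [V2, mkDerivation_X]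
  · simp [V2, mkDerivation_X]
  · apply key ![1, 1, b₁, 0, b₂] <;> simp
  · simp [V3, mkDerivation_X]
  · simp [V3, mkDerivation_X]
  · apply key ![0, 1, 1, b₁, b₂] <;> simp
end

section
/- In ℂ[z₂, z₃, w₁, w₂, w₃], let V₁, V₂, V₃ be the ℂ-linear derivations determined on the generators by: V₁(z₂) = −z₂w₃, V₁(z₃) = z₂w₂, V₁(w₁) = w₁w₃ − w₂², V₁(w₂) = 0, V₁(w₃) = 0; V₂(z₂) = 0, V₂(z₃) = 0, V₂(w₁) = z₃², V₂(w₂) = −z₂z₃, V₂(w₃) = z₂²; V₃(z₂) = z₃², V₃(z₃) = 0, V₃(w₁) = 0, V₃(w₂) = −w₁z₃, V₃(w₃) = w₁z₂ − w₂z₃. Then the ℂ-linear span of the set of products { f·g·h : f, g, h ∈ ℂ[z₂,z₃,w₁,w₂,w₃], V₂(f) = 0, V₃(g) = 0, V₁(h) = 0 } is all of ℂ[z₂, z₃, w₁, w₂, w₃]. -/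
open MvPolynomial

/-!
The kernel of a derivation is a subalgebra, and in a commutative algebra the products `f * g * h`
with `f, g, h` drawn from three subalgebras form a submonoid. Here every variable is killed by one
of the derivations (`z₂, z₃` by `V₂`, `w₁` by `V₃`, `w₂, w₃` by `V₁`), so this submonoid contains
all monomials, and these span the polynomial ring.
-/

namespace Derivation

variable {R A : Type*} [CommSemiring R] [CommSemiring A] [Algebra R A]

def constants (D : Derivation R A A) : Subalgebra R A where
  carrier := {a | D a = 0}
  mul_mem' ha hb := by simp_all [D.leibniz]
  add_mem' ha hb := by simp_all
  algebraMap_mem' r := D.map_algebraMap r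

@[simp]
theorem mem_constants {D : Derivation R A A} {a : A} : a ∈ D.constants ↔ D a = 0 := Iff.rfl

end Derivation

namespace Algebra

variable {R A : Type*} [CommSemiring R] [CommSemiring A] [Algebra R A]

theorem span_submonoid_eq_top_of_adjoin_eq_top {s : Set A} (hs : adjoin R s = ⊤)
    {M : Submonoid A} (hsM : s ⊆ M) : Submodule.span R (M : Set A) = ⊤ := by
  rw [← top_le_iff, ← top_toSubmodule, ← hs, adjoin_eq_span]
  exact Submodule.span_mono (Submonoid.closure_le.2 hsM)

theorem span_mul_mul_eq_top {s : Set A} (hs : adjoin R s = ⊤) (S₁ S₂ S₃ : Subalgebra R A)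
    (hsS : s ⊆ S₁ ∪ S₂ ∪ S₃) :
    Submodule.span R {q | ∃ f g h, f ∈ S₁ ∧ g ∈ S₂ ∧ h ∈ S₃ ∧ q = f * g * h} = ⊤ := by
  let M := S₁.toSubmonoid ⊔ S₂.toSubmonoid ⊔ S₃.toSubmonoid
  have hM : {q | ∃ f g h, f ∈ S₁ ∧ g ∈ S₂ ∧ h ∈ S₃ ∧ q = f * g * h} = (M : Set A) := by
    ext q
    simp only [M, Set.mem_ofPred_eq, SetLike.mem_coe, Submonoid.mem_sup]
    constructor
    · rintro ⟨f, g, h, hf, hg, hh, rfl⟩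
      exact ⟨f * g, ⟨f, hf, g, hg, rfl⟩, h, hh, rfl⟩
    · rintro ⟨_, ⟨f, hf, g, hg, rfl⟩, h, hh, rfl⟩
      exact ⟨f, g, h, hf, hg, hh, rfl⟩
  rw [hM]
  refine span_submonoid_eq_top_of_adjoin_eq_top hs (hsS.trans ?_)
  rintro x ((hx | hx) | hx)
  · exact (le_sup_left.trans le_sup_left : S₁.toSubmonoid ≤ M) hx
  · exact (le_sup_right.trans le_sup_left : S₂.toSubmonoid ≤ M) hx
  · exact (le_sup_right : S₃.toSubmonoid ≤ M) hx

end Algebra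

/-- The span of products of kernel elements of `V₂, V₃, V₁` is everything:
`span(ker V₂ ⋅ ker V₃ ⋅ ker V₁) = ℂ[z₂,z₃,w₁,w₂,w₃]`. -/
theorem gv_fiber_span_of_kernels :
    Submodule.span ℂ
      {q : MvPolynomial (Fin 5) ℂ |
        ∃ f g h : MvPolynomial (Fin 5) ℂ,
          V2 f = 0 ∧ V3 g = 0 ∧ V1 h = 0 ∧ q = f * g * h} = ⊤ := by
  refine Algebra.span_mul_mul_eq_top (adjoin_range_X (R := ℂ)) V2.constants V3.constants
    V1.constants ?_
  rintro _ ⟨i, rfl⟩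
  fin_cases i <;> simp [V1, V2, V3, mkDerivation_X]
end

section
/- Let (b₁, b₂) ∈ ℂ² ∖ {(0,0)} and let (z₂, z₃, w₁, w₂, w₃) ∈ ℂ⁵ satisfy w₁z₂ + w₂z₃ = b₁ and w₂z₂ + w₃z₃ = b₂. Then the two gradient vectors g₁ = (w₁, w₂, z₂, z₃, 0) and g₂ = (w₂, w₃, 0, z₂, z₃) of the defining equations (partial derivatives taken with respect to z₂, z₃, w₁, w₂, w₃ in this order) are linearly independent over ℂ. In particular the Gromov–Vaserstein fiber 𝒢 = {(z₂,z₃,w₁,w₂,w₃) ∈ ℂ⁵ : w₁z₂ + w₂z₃ = b₁, w₂z₂ + w₃z₃ = b₂} is a smooth 3-dimensional variety. -/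
/-- At every point of the Gromov–Vaserstein fiber
`{(z₂,z₃,w₁,w₂,w₃) : w₁z₂ + w₂z₃ = b₁, w₂z₂ + w₃z₃ = b₂}` with
`(b₁,b₂) ≠ (0,0)`, the gradients `(w₁, w₂, z₂, z₃, 0)` and
`(w₂, w₃, 0, z₂, z₃)` of the defining equations are linearly independent;
hence the fiber is a smooth 3-dimensional variety. -/
theorem gv_fiber_smooth (b₁ b₂ z₂ z₃ w₁ w₂ w₃ : ℂ)
    (hb : (b₁, b₂) ≠ (0, 0))
    (h1 : w₁ * z₂ + w₂ * z₃ = b₁) (h2 : w₂ * z₂ + w₃ * z₃ = b₂) :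
    LinearIndependent ℂ ![![w₁, w₂, z₂, z₃, 0], ![w₂, w₃, 0, z₂, z₃]] := by
  rw [LinearIndependent.pair_iff]
  intro s t h
  have e2 : s * z₂ = 0 := by have := congrFun h 2; simpa using this
  have e3 : s * z₃ + t * z₂ = 0 := by have := congrFun h 3; simpa using this
  have e4 : t * z₃ = 0 := by have := congrFun h 4; simpa using this
  by_contra hst
  have hz : z₂ = 0 ∧ z₃ = 0 := by
    rcases not_and_or.mp hst with hs | ht
    · have hz2 : z₂ = 0 := by
        rcases mul_eq_zero.mp e2 with h' | h' <;> [exact absurd h' hs; exact h']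
      have hz3 : z₃ = 0 := by
        have : s * z₃ = 0 := by rw [hz2] at e3; simpa using e3
        rcases mul_eq_zero.mp this with h' | h' <;> [exact absurd h' hs; exact h']
      exact ⟨hz2, hz3⟩
    · have hz3 : z₃ = 0 := by
        rcases mul_eq_zero.mp e4 with h' | h' <;> [exact absurd h' ht; exact h']
      have hz2 : z₂ = 0 := by
        have : t * z₂ = 0 := by rw [hz3] at e3; simpa using e3
        rcases mul_eq_zero.mp this with h' | h' <;> [exact absurd h' ht; exact h']
      exact ⟨hz2, hz3⟩
  apply hb
  rw [← h1, ← h2, hz.1, hz.2]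
  simp
end
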